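/- arXiv:1906.04297 — 3 statements merged into one kernel-verified Lean document; each statement's English description precedes it below -/
import Mathlib

section
/- For every z ∈ ℝ with z ≠ 0, ((1 - e^z + z·e^z)·(e^z + 1))/(e^z - 1)² ≥ 1/2. -/
open Real

private lemma aux_nonneg {f : ℝ → ℝ} (hd : Differentiable ℝ f) (h0 : f 0 = 0)
    (hf' : ∀ x, 0 ≤ x → 0 ≤ deriv f x) {z : ℝ} (hz : 0 ≤ z) : 0 ≤ f z := by
  have hmono : MonotoneOn f (Set.Ici (0:ℝ)) := by
    refine monotoneOn_of_deriv_nonneg (convex_Ici 0) hd.continuous.continuousOn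
      (fun x hx => (hd x).differentiableWithinAt) ?_
    intro x hx
    rw [interior_Ici] at hx
    exact hf' x (le_of_lt hx)
  have := hmono (Set.self_mem_Ici) (Set.mem_Ici.mpr hz) hz
  rw [h0] at this
  exact this

private lemma lemA {w : ℝ} (hw : 0 ≤ w) : 0 ≤ exp (2*w) - w * exp w - 1 := by
  have hd : Differentiable ℝ (fun w : ℝ => exp (2*w) - w * exp w - 1) := by
    fun_prop
  refine aux_nonneg hd (by norm_num) ?_ hw
  intro x hx
  have hder : deriv (fun w : ℝ => exp (2*w) - w * exp w - 1) x
      = 2 * exp (2*x) - (exp x + x * exp x) := by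
    have h1 : HasDerivAt (fun w : ℝ => exp (2*w)) (exp (2*x) * 2) x := by
      have := (Real.hasDerivAt_exp (2*x)).comp x ((hasDerivAt_id x).const_mul 2)
      simpa [Function.comp_def] using this
    have h2 : HasDerivAt (fun w : ℝ => w * exp w) (1 * exp x + x * exp x) x :=
      (hasDerivAt_id x).mul (Real.hasDerivAt_exp x)
    have := ((h1.sub h2).sub_const 1).deriv
    simp only [Pi.sub_apply] at this
    rw [this]; ring
  rw [hder]
  have h1 : (1 + x) * exp x ≤ exp x * exp x := by
    have := Real.add_one_le_exp x
    nlinarith [Real.exp_pos x]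
  have h2 : exp x * exp x = exp (2*x) := by rw [← Real.exp_add]; ring_nf
  nlinarith [Real.exp_pos (2*x)]

private lemma lemB {w : ℝ} (hw : 0 ≤ w) :
    0 ≤ exp (2*w) + 2 * exp w - 2 * w * exp w - 2 * w - 3 := by
  have hd : Differentiable ℝ (fun w : ℝ => exp (2*w) + 2 * exp w - 2 * w * exp w - 2 * w - 3) := by
    fun_prop
  refine aux_nonneg hd (by norm_num) ?_ hw
  intro x hx
  have hder : deriv (fun w : ℝ => exp (2*w) + 2 * exp w - 2 * w * exp w - 2 * w - 3) x
      = 2 * exp (2*x) + 2 * exp x - (2 * exp x + 2 * x * exp x) - 2 := by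
    have h1 : HasDerivAt (fun w : ℝ => exp (2*w)) (exp (2*x) * 2) x := by
      have := (Real.hasDerivAt_exp (2*x)).comp x ((hasDerivAt_id x).const_mul 2)
      simpa [Function.comp_def] using this
    have h2 : HasDerivAt (fun w : ℝ => 2 * exp w) (2 * exp x) x := by
      simpa using (Real.hasDerivAt_exp x).const_mul 2
    have h3 : HasDerivAt (fun w : ℝ => 2 * w * exp w) (2 * exp x + 2 * x * exp x) x := by
      have : HasDerivAt (fun w : ℝ => (2 * w) * exp w) (2 * exp x + (2*x) * exp x) x := by
        have := ((hasDerivAt_id x).const_mul 2).mul (Real.hasDerivAt_exp x)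
        simpa [Pi.mul_def] using this
      simpa using this
    have h4 : HasDerivAt (fun w : ℝ => 2 * w) 2 x := by
      simpa using (hasDerivAt_id x).const_mul 2
    have := ((((h1.add h2).sub h3).sub h4).sub_const 3).deriv
    simp only [Pi.sub_apply, Pi.add_apply] at this
    rw [this]; ring
  rw [hder]
  have := lemA hx
  nlinarith

private lemma lemC {z : ℝ} (hzn : 0 ≤ z) :
    0 ≤ (4 + 2*z) * exp z + (4*z - 4) * exp (2*z) := by
  have hd : Differentiable ℝ (fun z : ℝ => (4 + 2*z) * exp z + (4*z - 4) * exp (2*z)) := by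
    fun_prop
  refine aux_nonneg hd (by norm_num) ?_ hzn
  intro x hx
  have hder : deriv (fun z : ℝ => (4 + 2*z) * exp z + (4*z - 4) * exp (2*z)) x
      = (2 * exp x + (4 + 2*x) * exp x) + (4 * exp (2*x) + (4*x - 4) * (exp (2*x) * 2)) := by
    have h1 : HasDerivAt (fun z : ℝ => (4 + 2*z) * exp z)
        (2 * exp x + (4 + 2*x) * exp x) x := by
      have ha : HasDerivAt (fun z : ℝ => 4 + 2*z) 2 x := by
        simpa using ((hasDerivAt_id x).const_mul 2).const_add 4
      exact ha.mul (Real.hasDerivAt_exp x)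
    have h2 : HasDerivAt (fun z : ℝ => (4*z - 4) * exp (2*z))
        (4 * exp (2*x) + (4*x - 4) * (exp (2*x) * 2)) x := by
      have ha : HasDerivAt (fun z : ℝ => 4*z - 4) 4 x := by
        simpa using ((hasDerivAt_id x).const_mul 4).sub_const 4
      have hb : HasDerivAt (fun z : ℝ => exp (2*z)) (exp (2*x) * 2) x := by
        have := (Real.hasDerivAt_exp (2*x)).comp x ((hasDerivAt_id x).const_mul 2)
        simpa [Function.comp_def] using this
      exact ha.mul hb
    exact (h1.add h2).deriv
  rw [hder]
  have hp := Real.exp_pos x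
  have hE := Real.exp_pos (2*x)
  -- need (6+2x) exp x + (8x-4) exp(2x) ≥ 0
  rcases le_or_gt (1/2 : ℝ) x with h | h
  · have h1 : (0:ℝ) ≤ (8*x - 4) * exp (2*x) :=
      mul_nonneg (by linarith) hE.le
    have h2 : (0:ℝ) ≤ (6 + 2*x) * exp x :=
      mul_nonneg (by linarith) hp.le
    nlinarith [h1, h2]
  · -- x < 1/2 : use exp x ≤ 1 + 2x
    have hxe : exp x ≤ 1 + 2*x := by
      have h1 : 1 - x ≤ exp (-x) := by
        have := Real.add_one_le_exp (-x)
        linarith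
      have h2 : exp (-x) * exp x = 1 := by
        rw [← Real.exp_add]; simp
      have h3 : (1 - x) * exp x ≤ 1 := by
        calc (1 - x) * exp x ≤ exp (-x) * exp x :=
              mul_le_mul_of_nonneg_right h1 (le_of_lt (Real.exp_pos x))
          _ = 1 := h2
      nlinarith [Real.exp_pos x]
    have h2x : exp (2*x) = exp x * exp x := by rw [← Real.exp_add]; ring_nf
    have hneg : 8*x - 4 ≤ 0 := by linarith
    have hb : (8*x - 4) * exp (2*x) ≥ (8*x - 4) * ((1+2*x) * exp x) := by
      rw [h2x]
      have : exp x * exp x ≤ (1+2*x) * exp x :=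
        mul_le_mul_of_nonneg_right hxe (le_of_lt (Real.exp_pos x))
      nlinarith
    have heq : (8*x - 4) * ((1+2*x) * exp x) = (16*x^2 - 4) * exp x := by ring
    have hb' : (16*x^2 - 4) * exp x ≤ (8*x - 4) * exp (2*x) := by
      rw [← heq]; linarith [hb]
    have h2 : 0 ≤ (2 + 2*x + 16*x^2) * exp x := by
      nlinarith [mul_nonneg hx hp.le, mul_nonneg (mul_nonneg hx hx) hp.le]
    nlinarith [hb', h2]

private lemma lemD {z : ℝ} (hzn : 0 ≤ z) :
    0 ≤ 1 + 2 * exp z + 2 * z * exp z + (2*z - 3) * exp (2*z) := by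
  have hd : Differentiable ℝ
      (fun z : ℝ => 1 + 2 * exp z + 2 * z * exp z + (2*z - 3) * exp (2*z)) := by
    fun_prop
  refine aux_nonneg hd (by norm_num) ?_ hzn
  intro x hx
  have hder : deriv (fun z : ℝ => 1 + 2 * exp z + 2 * z * exp z + (2*z - 3) * exp (2*z)) x
      = 2 * exp x + (2 * exp x + 2 * x * exp x) + (2 * exp (2*x) + (2*x - 3) * (exp (2*x) * 2)) := by
    have h1 : HasDerivAt (fun z : ℝ => 2 * exp z) (2 * exp x) x := by
      simpa using (Real.hasDerivAt_exp x).const_mul 2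
    have h2 : HasDerivAt (fun z : ℝ => 2 * z * exp z) (2 * exp x + 2 * x * exp x) x := by
      have ha : HasDerivAt (fun z : ℝ => 2 * z) 2 x := by
        simpa using (hasDerivAt_id x).const_mul 2
      have := ha.mul (Real.hasDerivAt_exp x)
      exact this
    have h3 : HasDerivAt (fun z : ℝ => (2*z - 3) * exp (2*z))
        (2 * exp (2*x) + (2*x - 3) * (exp (2*x) * 2)) x := by
      have ha : HasDerivAt (fun z : ℝ => 2*z - 3) 2 x := by
        simpa using ((hasDerivAt_id x).const_mul 2).sub_const 3
      have hb : HasDerivAt (fun z : ℝ => exp (2*z)) (exp (2*x) * 2) x := by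
        have := (Real.hasDerivAt_exp (2*x)).comp x ((hasDerivAt_id x).const_mul 2)
        simpa [Function.comp_def] using this
      exact ha.mul hb
    have hfull : HasDerivAt (fun z : ℝ => 1 + 2 * exp z + 2 * z * exp z + (2*z - 3) * exp (2*z))
        (2 * exp x + (2 * exp x + 2 * x * exp x) + (2 * exp (2*x) + (2*x - 3) * (exp (2*x) * 2))) x := by
      exact ((h1.const_add 1).add h2).add h3
    exact hfull.deriv
  rw [hder]
  have := lemC hx
  nlinarith

private lemma key (z : ℝ) :
    0 ≤ 1 + 2 * exp z + 2 * z * exp z + (2*z - 3) * exp (2*z) := by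
  rcases le_or_gt 0 z with h | h
  · exact lemD h
  · have hw : 0 ≤ -z := by linarith
    have hB := lemB hw
    have he : exp (2*z) * exp (2*(-z)) = 1 := by
      rw [← Real.exp_add]; ring_nf; simp
    have he2 : exp (2*z) * exp (-z) = exp z := by
      rw [← Real.exp_add]; ring_nf
    have hp := Real.exp_pos (2*z)
    have hmul : 0 ≤ exp (2*z) * (exp (2*(-z)) + 2 * exp (-z) - 2 * (-z) * exp (-z) - 2 * (-z) - 3) :=
      mul_nonneg (le_of_lt hp) hB
    calc (0:ℝ) ≤ exp (2*z) * (exp (2*(-z)) + 2 * exp (-z) - 2 * (-z) * exp (-z) - 2 * (-z) - 3) := hmul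
      _ = exp (2*z) * exp (2*(-z)) + 2 * (exp (2*z) * exp (-z)) + 2 * z * (exp (2*z) * exp (-z))
          + (2*z - 3) * exp (2*z) := by ring
      _ = 1 + 2 * exp z + 2 * z * exp z + (2*z - 3) * exp (2*z) := by rw [he, he2]

theorem stmt_3 (z : ℝ) (hz : z ≠ 0) :
    ((1 - Real.exp z + z * Real.exp z) * (Real.exp z + 1)) / (Real.exp z - 1) ^ 2 ≥ 1 / 2 := by
  have hne : Real.exp z ≠ 1 := by
    intro h
    apply hz
    have := Real.exp_injective (by rw [h, Real.exp_zero] : Real.exp z = Real.exp 0)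
    exact this
  have hpos : (0:ℝ) < (Real.exp z - 1) ^ 2 := by
    have : Real.exp z - 1 ≠ 0 := sub_ne_zero.mpr hne
    positivity
  rw [ge_iff_le, div_le_div_iff₀ (by norm_num) hpos]
  have hk := key z
  have h2 : exp (2*z) = exp z * exp z := by rw [← Real.exp_add]; ring_nf
  rw [h2] at hk
  nlinarith
end

section
/- Let σ ∈ ℝ, N ≥ 2, K_α > 0 for α ∈ Fin N, J : Fin N → ℝ, and fix α. Suppose σ ≥ ψ·∑_β J(β)²/(4K_β) with ψ > 0 and suppose ∑_β J(β) = 0. Then σ ≥ (ψ(1+θ)/(4K_α))·J(α)², where θ = K_α/∑_{β≠α} K_β. -/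
theorem stmt_8 (σ ψ : ℝ) (N : ℕ) (hN : 2 ≤ N) (K : Fin N → ℝ) (hK : ∀ β, 0 < K β)
    (J : Fin N → ℝ) (α : Fin N) (hψ : 0 < ψ)
    (h : σ ≥ ψ * ∑ β, J β ^ 2 / (4 * K β)) (hsum : ∑ β, J β = 0) :
    σ ≥ (ψ * (1 + K α / ∑ β ∈ Finset.univ.erase α, K β) / (4 * K α)) * J α ^ 2 := by
  set s := Finset.univ.erase α with hs
  have hne : s.Nonempty := by
    obtain ⟨β, hβ⟩ : ∃ β : Fin N, β ≠ α :=
      Fintype.exists_ne_of_one_lt_card (by simpa using (show 1 < N by omega)) α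
    exact ⟨β, Finset.mem_erase.mpr ⟨hβ, Finset.mem_univ β⟩⟩
  have hS : 0 < ∑ β ∈ s, K β := Finset.sum_pos (fun i _ => hK i) hne
  set S := ∑ β ∈ s, K β with hSdef
  have hJs : ∑ β ∈ s, J β = -J α := by
    have := Finset.sum_erase_add Finset.univ J (Finset.mem_univ α)
    linarith [this.symm ▸ hsum, this]
  -- Cauchy-Schwarz (Engel form) on s
  have hcs : (J α) ^ 2 / (4 * S) ≤ ∑ β ∈ s, J β ^ 2 / (4 * K β) := by
    have := Finset.sq_sum_div_le_sum_sq_div s J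
      (g := fun β => 4 * K β) (fun i _ => by have := hK i; positivity)
    rw [hJs, ← Finset.mul_sum] at this
    simpa [neg_pow] using this
  have hsplit : ∑ β, J β ^ 2 / (4 * K β)
      = J α ^ 2 / (4 * K α) + ∑ β ∈ s, J β ^ 2 / (4 * K β) := by
    rw [hs, ← Finset.add_sum_erase Finset.univ _ (Finset.mem_univ α)]
  have hKα := hK α
  have key : ∑ β, J β ^ 2 / (4 * K β)
      ≥ ((1 + K α / S) / (4 * K α)) * J α ^ 2 := by
    rw [hsplit]
    have : ((1 + K α / S) / (4 * K α)) * J α ^ 2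
        = J α ^ 2 / (4 * K α) + J α ^ 2 / (4 * S) := by
      field_simp
    rw [this]
    linarith
  calc σ ≥ ψ * ∑ β, J β ^ 2 / (4 * K β) := h
    _ ≥ ψ * (((1 + K α / S) / (4 * K α)) * J α ^ 2) := by
        exact mul_le_mul_of_nonneg_left key hψ.le
    _ = (ψ * (1 + K α / S) / (4 * K α)) * J α ^ 2 := by ring
end

section
/- Let a, b ∈ (0,1), x ∈ ℝ, and define Ξ(x) = (ν_b − ν_a)·b − g_b + g_a + 2ψ·x·(a − b) + ψ·x²·(a(1−b) + b(1−a)), where ν_a = ln(a/(1−a)), g_a = ν_a − ln(a) = −ln(1−a), and similarly for b. If ψ ≤ ((1 − e^z + z e^z)(e^z + 1))/(e^z − 1)² for all z ≠ 0, then Ξ(x) ≥ 0 for all x ∈ ℝ. -/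
open Set

lemma aux_conv {c : ℝ} {F F' F'' : ℝ → ℝ}
    (hd1 : ∀ x, c ≤ x → HasDerivAt F (F' x) x)
    (hd2 : ∀ x, c ≤ x → HasDerivAt F' (F'' x) x)
    (h0 : F c = 0) (h0' : F' c = 0)
    (hnn : ∀ x, c ≤ x → 0 ≤ F'' x) :
    ∀ x, c ≤ x → 0 ≤ F x := by
  have m1 : MonotoneOn F' (Set.Ici c) := by
    apply monotoneOn_of_deriv_nonneg (convex_Ici c)
    · exact fun x hx => (hd2 x hx).continuousAt.continuousWithinAt
    · intro x hx
      rw [interior_Ici] at hx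
      exact (hd2 x hx.le).differentiableAt.differentiableWithinAt
    · intro x hx
      rw [interior_Ici] at hx
      rw [(hd2 x hx.le).deriv]
      exact hnn x hx.le
  have hF' : ∀ x, c ≤ x → 0 ≤ F' x := by
    intro x hx
    have := m1 (self_mem_Ici) hx hx
    linarith [h0' ▸ this]
  have m2 : MonotoneOn F (Set.Ici c) := by
    apply monotoneOn_of_deriv_nonneg (convex_Ici c)
    · exact fun x hx => (hd1 x hx).continuousAt.continuousWithinAt
    · intro x hx
      rw [interior_Ici] at hx
      exact (hd1 x hx.le).differentiableAt.differentiableWithinAt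
    · intro x hx
      rw [interior_Ici] at hx
      rw [(hd1 x hx.le).deriv]
      exact hF' x hx.le
  intro x hx
  have := m2 (self_mem_Ici) hx hx
  linarith [h0 ▸ this]

lemma claim1 (t : ℝ) (ht : 0 < t) :
    ∀ s, t ≤ s →
      s - t + s*t*(Real.log s - Real.log t) ≤ (1+s)*(1+t)*(Real.log (1+s) - Real.log (1+t)) := by
  have key := aux_conv (c := t)
    (F := fun y : ℝ => (1+y)*(1+t)*(Real.log (1+y) - Real.log (1+t)) - y*t*(Real.log y - Real.log t) - y + t)
    (F' := fun y : ℝ => (1+t)*(Real.log (1+y) - Real.log (1+t)) - t*(Real.log y - Real.log t))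
    (F'' := fun y : ℝ => (1+t)/(1+y) - t/y)
    (hd1 := by
      intro s hts
      have hx : 0 < s := lt_of_lt_of_le ht hts
      have l1 : HasDerivAt (fun y : ℝ => Real.log (1+y)) (1/(1+s)) s := by
        simpa using ((hasDerivAt_id s).const_add 1).log (by positivity)
      have l2 : HasDerivAt Real.log s⁻¹ s := Real.hasDerivAt_log (ne_of_gt hx)
      have p1 := (((hasDerivAt_id s).const_add 1).mul_const (1+t)).mul (l1.sub_const (Real.log (1+t)))
      have p2 := ((hasDerivAt_id s).mul_const t).mul (l2.sub_const (Real.log t))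
      have h := ((p1.sub p2).sub (hasDerivAt_id s)).add_const t
      refine h.congr_deriv ?_
      have h1s : (1:ℝ)+s ≠ 0 := by positivity
      simp only [id_eq]
      field_simp
      ring)
    (hd2 := by
      intro s hts
      have hx : 0 < s := lt_of_lt_of_le ht hts
      have l1 : HasDerivAt (fun y : ℝ => Real.log (1+y)) (1/(1+s)) s := by
        simpa using ((hasDerivAt_id s).const_add 1).log (by positivity)
      have l2 : HasDerivAt Real.log s⁻¹ s := Real.hasDerivAt_log (ne_of_gt hx)
      have h := ((l1.sub_const (Real.log (1+t))).const_mul (1+t)).sub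
        ((l2.sub_const (Real.log t)).const_mul t)
      refine h.congr_deriv ?_
      have h1s : (1:ℝ)+s ≠ 0 := by positivity
      field_simp)
    (h0 := by ring)
    (h0' := by ring)
    (hnn := by
      intro s hts
      have hx : 0 < s := lt_of_lt_of_le ht hts
      rw [sub_nonneg, div_le_div_iff₀ hx (by positivity)]
      nlinarith)
  intro s hts
  have := key s hts
  linarith

lemma claim2 (s : ℝ) (hs : 0 < s) :
    ∀ t, s ≤ t →
      (1+s)*(1+t)*(Real.log (1+t) - Real.log (1+s)) + (t - s) ≤ (s+t+s*t)*(Real.log t - Real.log s) := by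
  have key := aux_conv (c := s)
    (F := fun y : ℝ => (s+y+s*y)*(Real.log y - Real.log s) - (y - s) - (1+s)*(1+y)*(Real.log (1+y) - Real.log (1+s)))
    (F' := fun y : ℝ => (1+s)*(Real.log y - Real.log s - Real.log (1+y) + Real.log (1+s)) + s/y - 1)
    (F'' := fun y : ℝ => (1+s)*(1/y - 1/(1+y)) - s/y^2)
    (hd1 := by
      intro t hst
      have hx : 0 < t := lt_of_lt_of_le hs hst
      have l1 : HasDerivAt (fun y : ℝ => Real.log (1+y)) (1/(1+t)) t := by
        simpa using ((hasDerivAt_id t).const_add 1).log (by positivity)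
      have l2 : HasDerivAt Real.log t⁻¹ t := Real.hasDerivAt_log (ne_of_gt hx)
      have p1 := ((((hasDerivAt_id t).const_add s).add ((hasDerivAt_id t).const_mul s)).mul (l2.sub_const (Real.log s)))
      have p2 := (((hasDerivAt_id t).const_add 1).const_mul (1+s)).mul (l1.sub_const (Real.log (1+s)))
      have h := (p1.sub ((hasDerivAt_id t).sub_const s)).sub p2
      refine h.congr_deriv ?_
      have h1t : (1:ℝ)+t ≠ 0 := by positivity
      simp only [id_eq, Pi.add_apply]
      field_simp
      ring)
    (hd2 := by
      intro t hst
      have hx : 0 < t := lt_of_lt_of_le hs hst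
      have l1 : HasDerivAt (fun y : ℝ => Real.log (1+y)) (1/(1+t)) t := by
        simpa using ((hasDerivAt_id t).const_add 1).log (by positivity)
      have l2 : HasDerivAt Real.log t⁻¹ t := Real.hasDerivAt_log (ne_of_gt hx)
      have linv : HasDerivAt (fun y : ℝ => s/y) (-(s/t^2)) t := by
        have h2 := ((hasDerivAt_id t).inv (ne_of_gt hx)).const_mul s
        simp only [div_eq_mul_inv]
        refine h2.congr_deriv ?_
        simp
        ring
      have h := ((((l2.sub_const (Real.log s)).sub l1).add_const (Real.log (1+s))).const_mul (1+s)).add linv |>.sub_const 1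
      refine h.congr_deriv ?_
      have h1t : (1:ℝ)+t ≠ 0 := by positivity
      field_simp
      ring)
    (h0 := by ring)
    (h0' := by field_simp; ring)
    (hnn := by
      intro t hst
      have hx : 0 < t := lt_of_lt_of_le hs hst
      have h1t : (0:ℝ) < 1+t := by positivity
      rw [sub_nonneg, div_le_iff₀ (by positivity : (0:ℝ) < t^2)]
      have e : (1+s)*(1/t - 1/(1+t)) = (1+s)/(t*(1+t)) := by
        field_simp
        ring
      rw [e, div_mul_eq_mul_div, le_div_iff₀ (by positivity)]
      nlinarith)
  intro t hst
  have := key t hst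
  linarith

lemma key_ineq (ψ s t : ℝ) (hs : 0 < s) (ht : 0 < t) (hψpos : 0 < ψ)
    (hψ : ∀ z : ℝ, z ≠ 0 →
      ψ ≤ ((1 - Real.exp z + z * Real.exp z) * (Real.exp z + 1)) / (Real.exp z - 1) ^ 2) :
    ψ * (s - t)^2 ≤ (s + t) *
      ((Real.log t - Real.log s) * t * (1+s) + (1+s)*(1+t)*(Real.log (1+s) - Real.log (1+t))) := by
  rcases lt_trichotomy s t with hlt | heq | hgt
  · -- s < t : use z = log s - log t, claim2
    have hz : Real.log s - Real.log t ≠ 0 := by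
      have : Real.log s < Real.log t := Real.log_lt_log hs hlt
      intro h; linarith [sub_eq_zero.mp h]
    have hf := hψ _ hz
    rw [Real.exp_sub, Real.exp_log hs, Real.exp_log ht] at hf
    have hst : s - t ≠ 0 := by intro h; linarith [sub_eq_zero.mp h]
    have hne : s/t - 1 ≠ 0 := by
      intro h
      have : s/t = 1 := by linarith
      rw [div_eq_one_iff_eq (ne_of_gt ht)] at this
      exact hst (by linarith)
    have hq : ((1 - s/t + (Real.log s - Real.log t) * (s/t)) * (s/t + 1)) / (s/t - 1) ^ 2
        = ((t - s + (Real.log s - Real.log t) * s) * (s + t)) / (s - t)^2 := by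
      rw [div_eq_div_iff (pow_ne_zero 2 hne) (pow_ne_zero 2 hst)]
      field_simp
    rw [hq] at hf
    have h1 : ψ * (s-t)^2 ≤ (t - s + (Real.log s - Real.log t) * s) * (s + t) := by
      rw [le_div_iff₀ (lt_of_le_of_ne (sq_nonneg _) (Ne.symm (pow_ne_zero 2 hst)))] at hf
      linarith
    have c2 := claim2 s hs t hlt.le
    have hA : 0 ≤ (Real.log t - Real.log s) * t * (1+s) + (1+s)*(1+t)*(Real.log (1+s) - Real.log (1+t))
        - (t - s + (Real.log s - Real.log t) * s) := by linarith
    nlinarith [mul_nonneg (by positivity : (0:ℝ) ≤ s + t) hA]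
  · subst heq
    simp
  · -- t < s : use z = log t - log s, claim1
    have hz : Real.log t - Real.log s ≠ 0 := by
      have : Real.log t < Real.log s := Real.log_lt_log ht hgt
      intro h; linarith [sub_eq_zero.mp h]
    have hf := hψ _ hz
    rw [Real.exp_sub, Real.exp_log ht, Real.exp_log hs] at hf
    have hst : s - t ≠ 0 := by intro h; linarith [sub_eq_zero.mp h]
    have hne : t/s - 1 ≠ 0 := by
      intro h
      have : t/s = 1 := by linarith
      rw [div_eq_one_iff_eq (ne_of_gt hs)] at this
      exact hst (by linarith)
    have hq : ((1 - t/s + (Real.log t - Real.log s) * (t/s)) * (t/s + 1)) / (t/s - 1) ^ 2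
        = ((s - t + (Real.log t - Real.log s) * t) * (s + t)) / (s - t)^2 := by
      rw [div_eq_div_iff (pow_ne_zero 2 hne) (pow_ne_zero 2 hst)]
      field_simp
      first
        | ring1
        | (left; ring1)
        | (right; ring1)
    rw [hq] at hf
    have h1 : ψ * (s-t)^2 ≤ (s - t + (Real.log t - Real.log s) * t) * (s + t) := by
      rw [le_div_iff₀ (lt_of_le_of_ne (sq_nonneg _) (Ne.symm (pow_ne_zero 2 hst)))] at hf
      linarith
    have c1 := claim1 t ht s hgt.le
    have hA : 0 ≤ (Real.log t - Real.log s) * t * (1+s) + (1+s)*(1+t)*(Real.log (1+s) - Real.log (1+t))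
        - (s - t + (Real.log t - Real.log s) * t) := by linarith
    nlinarith [mul_nonneg (by positivity : (0:ℝ) ≤ s + t) hA]

theorem stmt_10 (a b ψ : ℝ) (ha : a ∈ Set.Ioo (0:ℝ) 1) (hb : b ∈ Set.Ioo (0:ℝ) 1)
    (hψpos : 0 < ψ)
    (hψ : ∀ z : ℝ, z ≠ 0 →
      ψ ≤ ((1 - Real.exp z + z * Real.exp z) * (Real.exp z + 1)) / (Real.exp z - 1) ^ 2)
    (x : ℝ) :
    (Real.log (b / (1 - b)) - Real.log (a / (1 - a))) * b
      - (-Real.log (1 - b)) + (-Real.log (1 - a))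
      + 2 * ψ * x * (a - b)
      + ψ * x ^ 2 * (a * (1 - b) + b * (1 - a)) ≥ 0 := by
  obtain ⟨ha0, ha1⟩ := ha
  obtain ⟨hb0, hb1⟩ := hb
  have h1a : (0:ℝ) < 1 - a := by linarith
  have h1b : (0:ℝ) < 1 - b := by linarith
  set s := a / (1 - a) with hs_def
  set t := b / (1 - b) with ht_def
  have hs : 0 < s := div_pos ha0 h1a
  have ht : 0 < t := div_pos hb0 h1b
  have h1s : (0:ℝ) < 1 + s := by linarith
  have h1t : (0:ℝ) < 1 + t := by linarith
  have honea : 1 + s = 1 / (1 - a) := by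
    rw [hs_def]
    field_simp
    ring
  have honeb : 1 + t = 1 / (1 - b) := by
    rw [ht_def]
    field_simp
    ring
  have ha' : s / (1 + s) = a := by
    rw [honea, hs_def]
    field_simp
  have hb' : t / (1 + t) = b := by
    rw [honeb, ht_def]
    field_simp
  have hla : Real.log (1 - a) = -Real.log (1 + s) := by
    rw [honea, Real.log_div one_ne_zero (ne_of_gt h1a), Real.log_one]
    ring
  have hlb : Real.log (1 - b) = -Real.log (1 + t) := by
    rw [honeb, Real.log_div one_ne_zero (ne_of_gt h1b), Real.log_one]
    ring
  have hkey := key_ineq ψ s t hs ht hψpos hψ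
  have hQ : 0 ≤ ((Real.log t - Real.log s) * t * (1+s) + (1+s)*(1+t)*(Real.log (1+s) - Real.log (1+t)))
      + 2*ψ*x*(s - t) + ψ*x^2*(s + t) := by
    nlinarith [mul_nonneg hψpos.le (sq_nonneg ((s - t) + x*(s + t))), hkey,
      mul_pos hs ht, hs, ht, sq_nonneg (s - t)]
  have hgoal_eq : (Real.log t - Real.log s) * b
      - (-Real.log (1 - b)) + (-Real.log (1 - a))
      + 2 * ψ * x * (a - b)
      + ψ * x ^ 2 * (a * (1 - b) + b * (1 - a))
      = (((Real.log t - Real.log s) * t * (1+s) + (1+s)*(1+t)*(Real.log (1+s) - Real.log (1+t)))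
      + 2*ψ*x*(s - t) + ψ*x^2*(s + t)) / ((1+s)*(1+t)) := by
    rw [hla, hlb, ← ha', ← hb']
    field_simp
    ring
  rw [ge_iff_le, hgoal_eq]
  exact div_nonneg hQ (by positivity)
end
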